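/- arXiv:2605.26852 — 2 statements merged into one kernel-verified Lean document; each statement's English description precedes it below -/
import Mathlib

section
/- Let p ≥ 1 be an integer, let N be a p-rooted almost-binary phylogenetic network on X, and let Z be a maximal zig-zag trail of N of length at most 2. Then E(Z) is the unique A-admissible subset of E(Z) (hence also the unique B-admissible and unique C-admissible subset). -/
open Finset

variable {V : Type} [DecidableEq V] [Fintype V]

/-- The vertex set of the digraph given by the edge set `E`. -/
def verts (E : Finset (V × V)) : Finset V :=
  E.image Prod.fst ∪ E.image Prod.snd

/-- In-degree of `v` in the digraph with edge set `E`. -/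
def indeg (E : Finset (V × V)) (v : V) : ℕ :=
  (E.filter fun e => e.2 = v).card

/-- Out-degree of `v` in the digraph with edge set `E`. -/
def outdeg (E : Finset (V × V)) (v : V) : ℕ :=
  (E.filter fun e => e.1 = v).card

/-- `E` is (the edge set of) a `p`-rooted almost-binary phylogenetic network on `X`:
a finite simple DAG with exactly `p` in-degree-0 vertices, each of out-degree 1 or 2 (the roots),
whose set of in-degree-1, out-degree-0 vertices is `X` (the leaves), and all of whose other
vertices have in-degree and out-degree in `{1, 2}`. -/
structure IsPhyloNet (E : Finset (V × V)) (p : ℕ) (X : Finset V) : Prop where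
  acyclic : ∀ v : V, ¬ Relation.TransGen (fun a b => (a, b) ∈ E) v v
  roots_card : ((verts E).filter fun v => indeg E v = 0).card = p
  root_outdeg : ∀ v ∈ verts E, indeg E v = 0 → outdeg E v = 1 ∨ outdeg E v = 2
  leaves_eq : (verts E).filter (fun v => indeg E v = 1 ∧ outdeg E v = 0) = X
  internal_deg : ∀ v ∈ verts E, indeg E v ≠ 0 → v ∉ X →
    (indeg E v = 1 ∨ indeg E v = 2) ∧ (outdeg E v = 1 ∨ outdeg E v = 2)

/-- Two directed edges share a tail or share a head. -/
def Shares (e f : V × V) : Prop := e.1 = f.1 ∨ e.2 = f.2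

/-- `S` is (the edge set of) a zig-zag trail of the digraph `E`: a subgraph with `m ≥ 1`
edges which can be ordered so that consecutive edges share a head or share a tail. -/
def IsZigzagTrail (E S : Finset (V × V)) : Prop :=
  S ⊆ E ∧ ∃ l : List (V × V), l ≠ [] ∧ l.Nodup ∧ l.toFinset = S ∧ l.Chain' Shares

/-- A maximal zig-zag trail: one that is not a proper subgraph of another zig-zag trail. -/
def IsMaximalZigzagTrail (E S : Finset (V × V)) : Prop :=
  IsZigzagTrail E S ∧ ∀ S', IsZigzagTrail E S' → ¬ S ⊂ S'

/-- The `i`-th edge (0-indexed) of a zig-zag sequence on vertices `f 0, f 1, ...`;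
when `down = true` the first edge descends (`f 0 > f 1`), and directions alternate. -/
def zigEdge (f : ℕ → V) (down : Bool) (i : ℕ) : V × V :=
  if decide (i % 2 = 0) = down then (f i, f (i + 1)) else (f (i + 1), f i)

/-- `S` consists of the `m` distinct edges of the zig-zag sequence on `f 0, ..., f m`. -/
def IsZigzagShape (S : Finset (V × V)) (m : ℕ) (f : ℕ → V) (down : Bool) : Prop :=
  S = (Finset.range m).image (zigEdge f down) ∧
  ∀ i < m, ∀ j < m, zigEdge f down i = zigEdge f down j → i = j

/-- A crown: an even number `m` of edges written cyclically as `v₀ > v₁ < ⋯ < v_m = v₀`. -/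
def IsCrown (S : Finset (V × V)) : Prop :=
  ∃ m f, 1 ≤ m ∧ m % 2 = 0 ∧ f m = f 0 ∧ IsZigzagShape S m f true

/-- An M-fence: a non-crown with an even number `m` of edges,
of the form `v₀ < v₁ > ⋯ > v_m ≠ v₀`. -/
def IsMFence (S : Finset (V × V)) : Prop :=
  ¬ IsCrown S ∧ ∃ m f, 1 ≤ m ∧ m % 2 = 0 ∧ f m ≠ f 0 ∧ IsZigzagShape S m f false

/-- A W-fence: a non-crown with an even number `m` of edges,
of the form `v₀ > v₁ < ⋯ < v_m ≠ v₀`. -/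
def IsWFence (S : Finset (V × V)) : Prop :=
  ¬ IsCrown S ∧ ∃ m f, 1 ≤ m ∧ m % 2 = 0 ∧ f m ≠ f 0 ∧ IsZigzagShape S m f true

/-- An N-fence: a non-crown with an odd number `m` of edges,
of the form `v₀ > v₁ < ⋯ > v_m`. -/
def IsNFence (S : Finset (V × V)) : Prop :=
  ¬ IsCrown S ∧ ∃ m f, m % 2 = 1 ∧ IsZigzagShape S m f true

/-- A support network of `N = (V, E)`: a spanning subgraph that is itself a
`p`-rooted almost-binary phylogenetic network on `X` (identified with its edge set). -/
def IsSupportNet (E S : Finset (V × V)) (p : ℕ) (X : Finset V) : Prop :=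
  S ⊆ E ∧ verts S = verts E ∧ IsPhyloNet S p X

/-- A minimal support network: no support network is a proper subgraph of it. -/
def IsMinimalSupportNet (E S : Finset (V × V)) (p : ℕ) (X : Finset V) : Prop :=
  IsSupportNet E S p X ∧ ∀ S', IsSupportNet E S' p X → ¬ S' ⊂ S

/-- A minimum support network: one with the fewest edges among all support networks. -/
def IsMinimumSupportNet (E S : Finset (V × V)) (p : ℕ) (X : Finset V) : Prop :=
  IsSupportNet E S p X ∧ ∀ S', IsSupportNet E S' p X → S.card ≤ S'.card

/-- `S ⊆ Z` is A-admissible (degrees taken in the ambient network `E`):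
(C1) `S` contains every edge `(u,v)` of `Z` with `outdeg u = 1` or `indeg v = 1`;
(C2) of any two distinct edges of `Z` sharing a tail or a head, `S` contains at least one. -/
def AAdmissible (E Z S : Finset (V × V)) : Prop :=
  S ⊆ Z ∧
  (∀ e ∈ Z, (outdeg E e.1 = 1 ∨ indeg E e.2 = 1) → e ∈ S) ∧
  (∀ e₁ ∈ Z, ∀ e₂ ∈ Z, e₁ ≠ e₂ → Shares e₁ e₂ → e₁ ∈ S ∨ e₂ ∈ S)

/-- A B-admissible subset: an A-admissible subset none of whose proper subsets
is A-admissible. -/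
def BAdmissible (E Z S : Finset (V × V)) : Prop :=
  AAdmissible E Z S ∧ ∀ S', S' ⊂ S → ¬ AAdmissible E Z S'

/-- A C-admissible subset: an A-admissible subset of minimum cardinality. -/
def CAdmissible (E Z S : Finset (V × V)) : Prop :=
  AAdmissible E Z S ∧ ∀ S', AAdmissible E Z S' → S.card ≤ S'.card

/-- One subdivision step: an edge `(u, v)` is replaced by `(u, w), (w, v)` for a fresh
vertex `w`. -/
def SubdivStep (T T' : Finset (V × V)) : Prop :=
  ∃ u w v, (u, v) ∈ T ∧ w ∉ verts T ∧
    T' = insert (u, w) (insert (w, v) (T.erase (u, v)))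

/-- `S` is a subdivision of `T` (zero or more subdivision steps). -/
def IsSubdivisionOf (S T : Finset (V × V)) : Prop :=
  Relation.ReflTransGen SubdivStep T S

/-- A rooted binary phylogenetic tree on `X`: a 1-rooted network on `X` in which every
non-root, non-leaf vertex has in-degree 1 and out-degree 2. -/
def IsBinaryPhyloTree (T : Finset (V × V)) (X : Finset V) : Prop :=
  IsPhyloNet T 1 X ∧
  ∀ v ∈ verts T, indeg T v ≠ 0 → v ∉ X → indeg T v = 1 ∧ outdeg T v = 2

/-- `N = (V, E)` is tree-based: it has a support tree, i.e. a spanning subgraph that is a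
subdivision of some rooted binary phylogenetic tree on `X`. -/
def IsTreeBased (E : Finset (V × V)) (X : Finset V) : Prop :=
  ∃ S T, S ⊆ E ∧ verts S = verts E ∧ IsBinaryPhyloTree T X ∧ IsSubdivisionOf S T

/-- The underlying undirected simple graph of the digraph with edge set `S`. -/
def usym (S : Finset (V × V)) : SimpleGraph V where
  Adj u v := u ≠ v ∧ ((u, v) ∈ S ∨ (v, u) ∈ S)
  symm := ⟨fun _ _ h => ⟨h.1.symm, h.2.symm⟩⟩
  loopless := ⟨fun _ h => h.1 rfl⟩

/-- Two edges of `S` lie in a common block of the underlying undirected graph: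
they are equal or lie on a common cycle. -/
def SameBlock (S : Finset (V × V)) (e f : V × V) : Prop :=
  e = f ∨ ∃ (a : V) (w : (usym S).Walk a a), w.IsCycle ∧
    s(e.1, e.2) ∈ w.edges ∧ s(f.1, f.2) ∈ w.edges

/-- The number of reticulations (in-degree-2 vertices) contained in the block of the
edge `e` of `S`. -/
noncomputable def blockReticCount (S : Finset (V × V)) (e : V × V) : ℕ :=
  Set.ncard {v : V | indeg S v = 2 ∧ ∃ f ∈ S, SameBlock S e f ∧ (f.1 = v ∨ f.2 = v)}

/-- The level of the network with edge set `S`: the maximum number of reticulations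
contained in a block. -/
noncomputable def level (S : Finset (V × V)) : ℕ :=
  S.sup (blockReticCount S)

/-!
A maximal zig-zag trail contains every edge of the network that shares a tail or a head with
one of its end edges, and a trail with at most two edges consists of end edges only. So if an edge
`(u, v)` of the trail had a second out-edge at `u` and a second in-edge at `v`, these two would be
distinct further edges of the trail, which is too many. Hence every edge of the trail is forced
into every A-admissible subset by (C1).
-/

omit [DecidableEq V] [Fintype V] in
theorem Shares.symm {e f : V × V} (h : Shares e f) : Shares f e :=
  h.imp Eq.symm Eq.symm

omit [Fintype V] in
lemma exists_ne_tail_eq_of_outdeg_ne_one {E : Finset (V × V)} {e : V × V} (he : e ∈ E)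
    (h : outdeg E e.1 ≠ 1) : ∃ f ∈ E, f.1 = e.1 ∧ f ≠ e := by
  have hpos : 0 < outdeg E e.1 := card_pos.mpr ⟨e, mem_filter.mpr ⟨he, rfl⟩⟩
  obtain ⟨f, hf, hfe⟩ := exists_mem_ne (by omega : 1 < outdeg E e.1) e
  exact ⟨f, (mem_filter.mp hf).1, (mem_filter.mp hf).2, hfe⟩

omit [Fintype V] in
lemma exists_ne_head_eq_of_indeg_ne_one {E : Finset (V × V)} {e : V × V} (he : e ∈ E)
    (h : indeg E e.2 ≠ 1) : ∃ f ∈ E, f.2 = e.2 ∧ f ≠ e := by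
  have hpos : 0 < indeg E e.2 := card_pos.mpr ⟨e, mem_filter.mpr ⟨he, rfl⟩⟩
  obtain ⟨f, hf, hfe⟩ := exists_mem_ne (by omega : 1 < indeg E e.2) e
  exact ⟨f, (mem_filter.mp hf).1, (mem_filter.mp hf).2, hfe⟩

omit [Fintype V] in
lemma outdeg_eq_one_or_indeg_eq_one_of_card_le_two {E Z : Finset (V × V)} {e : V × V}
    (he : e ∈ Z) (heE : e ∈ E) (hcard : Z.card ≤ 2) (hclosed : ∀ f ∈ E, Shares f e → f ∈ Z) :
    outdeg E e.1 = 1 ∨ indeg E e.2 = 1 := by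
  by_contra! h
  obtain ⟨a, haE, hat, hae⟩ := exists_ne_tail_eq_of_outdeg_ne_one heE h.1
  obtain ⟨b, hbE, hbh, hbe⟩ := exists_ne_head_eq_of_indeg_ne_one heE h.2
  have hab : a ≠ b := fun hab => hae (Prod.ext hat (hab ▸ hbh))
  have hsub : ({e, a, b} : Finset (V × V)) ⊆ Z := by
    simp only [insert_subset_iff, singleton_subset_iff]
    exact ⟨he, hclosed a haE (Or.inl hat), hclosed b hbE (Or.inr hbh)⟩
  have := card_le_card hsub
  rw [card_insert_of_notMem (by simp [hae.symm, hbe.symm]), card_pair hab] at this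
  omega

omit [Fintype V] in
lemma IsMaximalZigzagTrail.mem_of_shares_head {E Z : Finset (V × V)}
    (hZ : IsMaximalZigzagTrail E Z) {e f : V × V} {l : List (V × V)}
    (hnd : (e :: l).Nodup) (htf : (e :: l).toFinset = Z) (hch : (e :: l).IsChain Shares)
    (hf : f ∈ E) (hfe : Shares f e) : f ∈ Z := by
  by_contra hfZ
  have hnd' : (f :: e :: l).Nodup := List.nodup_cons.mpr ⟨by simpa [← htf] using hfZ, hnd⟩
  exact hZ.2 (insert f Z) ⟨insert_subset hf hZ.1.1, f :: e :: l, List.cons_ne_nil _ _, hnd',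
    by simp [htf], List.IsChain.cons_cons hfe hch⟩ (ssubset_insert hfZ)

omit [Fintype V] in
lemma IsZigzagTrail.exists_chain_cons_of_card_le_two {E Z : Finset (V × V)}
    (hZ : IsZigzagTrail E Z) (hcard : Z.card ≤ 2) {e : V × V} (he : e ∈ Z) :
    ∃ l : List (V × V), (e :: l).Nodup ∧ (e :: l).toFinset = Z ∧ (e :: l).IsChain Shares := by
  obtain ⟨-, l, -, hnd, rfl, hch⟩ := hZ
  rw [List.toFinset_card_of_nodup hnd] at hcard
  match l, hnd, hch, hcard with
  | [a], hnd, hch, _ =>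
    obtain rfl : e = a := by simpa using he
    exact ⟨[], hnd, rfl, hch⟩
  | [a, b], hnd, hch, _ =>
    have hab : Shares a b := List.isChain_pair.mp hch
    rcases List.mem_pair.mp (List.mem_toFinset.mp he) with rfl | rfl
    · exact ⟨[b], hnd, rfl, hch⟩
    · have hswap : [e, a].Perm [a, e] := List.Perm.swap a e []
      exact ⟨[a], hswap.nodup_iff.mpr hnd, List.toFinset_eq_of_perm _ _ hswap,
        List.isChain_pair.mpr hab.symm⟩

omit [Fintype V] in
lemma aAdmissible_self (E Z : Finset (V × V)) : AAdmissible E Z Z :=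
  ⟨Subset.rfl, fun _ he _ => he, fun _ h₁ _ _ _ _ => Or.inl h₁⟩

omit [Fintype V] in
lemma aAdmissible_iff_eq_of_forall_forced {E Z : Finset (V × V)}
    (hforced : ∀ e ∈ Z, outdeg E e.1 = 1 ∨ indeg E e.2 = 1) (S : Finset (V × V)) :
    AAdmissible E Z S ↔ S = Z := by
  refine ⟨fun ⟨hSZ, hC1, _⟩ => Subset.antisymm hSZ fun e he => hC1 e he (hforced e he), ?_⟩
  rintro rfl
  exact aAdmissible_self E S

omit [Fintype V] in
lemma bAdmissible_iff_eq_of_aAdmissible_iff_eq {E Z : Finset (V × V)}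
    (hA : ∀ S, AAdmissible E Z S ↔ S = Z) (S : Finset (V × V)) :
    BAdmissible E Z S ↔ S = Z := by
  refine ⟨fun h => (hA S).mp h.1, ?_⟩
  rintro rfl
  exact ⟨(hA S).mpr rfl, fun S' hS' hA' => hS'.ne ((hA S').mp hA')⟩

omit [Fintype V] in
lemma cAdmissible_iff_eq_of_aAdmissible_iff_eq {E Z : Finset (V × V)}
    (hA : ∀ S, AAdmissible E Z S ↔ S = Z) (S : Finset (V × V)) :
    CAdmissible E Z S ↔ S = Z := by
  refine ⟨fun h => (hA S).mp h.1, ?_⟩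
  rintro rfl
  exact ⟨(hA S).mpr rfl, fun S' hA' => ((hA S').mp hA') ▸ le_rfl⟩

theorem stmt14_general
    (E : Finset (V × V))
    (Z : Finset (V × V)) (hZ : IsMaximalZigzagTrail E Z) (hcard : Z.card ≤ 2) :
    (∀ S, AAdmissible E Z S ↔ S = Z) ∧
    (∀ S, BAdmissible E Z S ↔ S = Z) ∧
    (∀ S, CAdmissible E Z S ↔ S = Z) := by
  have hforced : ∀ e ∈ Z, outdeg E e.1 = 1 ∨ indeg E e.2 = 1 := by
    intro e he
    obtain ⟨l, hnd, htf, hch⟩ := hZ.1.exists_chain_cons_of_card_le_two hcard he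
    exact outdeg_eq_one_or_indeg_eq_one_of_card_le_two he (hZ.1.1 he) hcard
      fun f hf hfe => hZ.mem_of_shares_head hnd htf hch hf hfe
  have hA := aAdmissible_iff_eq_of_forall_forced hforced
  exact ⟨hA, bAdmissible_iff_eq_of_aAdmissible_iff_eq hA,
    cAdmissible_iff_eq_of_aAdmissible_iff_eq hA⟩

/-- For a maximal zig-zag trail `Z` of length at most 2, `E(Z)` is the unique A-admissible
subset of `E(Z)` (hence also the unique B-admissible and unique C-admissible subset). -/
theorem stmt14 (p : ℕ) (hp : 1 ≤ p) (X : Finset V) (hX : X.Nonempty)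
    (E : Finset (V × V)) (hN : IsPhyloNet E p X)
    (Z : Finset (V × V)) (hZ : IsMaximalZigzagTrail E Z) (hcard : Z.card ≤ 2) :
    (∀ S, AAdmissible E Z S ↔ S = Z) ∧
    (∀ S, BAdmissible E Z S ↔ S = Z) ∧
    (∀ S, CAdmissible E Z S ↔ S = Z) :=
  stmt14_general E Z hZ hcard
end

section
/- Let N be a rooted almost-binary phylogenetic network on X whose maximal zig-zag trail decomposition consists of exactly one W-fence of length 4 together with M-fences of length 2 and N-fences of length 1. Then N has exactly two minimal support networks, and each of them has exactly one reticulation. -/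
open Finset

variable {V : Type} [DecidableEq V] [Fintype V]

/-!
Every edge other than the two middle edges `b = (v₂, v₁)` and `c = (v₂, v₃)` of the W-fence
`v₀ > v₁ < v₂ > v₃ < v₄` has a tail of out-degree one or a head of in-degree one, by maximality of
the fence containing it; such an edge lies in every support network, and every support network
keeps `b` or `c` because `v₂` is not a leaf. Deleting `b` or `c` only lowers two degrees from `2`
to `1`, so the minimal support networks are `E ∖ {b}` and `E ∖ {c}`. Two edges with a common head
lie in a common maximal zig-zag trail, which must be the W-fence, so `v₁` and `v₃` are the only
reticulations and each minimal support network keeps exactly one of them.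
-/

set_option linter.unusedSectionVars false

section Digraph

variable {E S : Finset (V × V)} {e f : V × V} {v : V}

lemma mem_verts_iff : v ∈ verts E ↔ ∃ e ∈ E, e.1 = v ∨ e.2 = v := by
  simp only [verts, mem_union, mem_image]
  constructor
  · rintro (⟨e, he, rfl⟩ | ⟨e, he, rfl⟩) <;> exact ⟨e, he, by simp⟩
  · rintro ⟨e, he, rfl | rfl⟩
    exacts [Or.inl ⟨e, he, rfl⟩, Or.inr ⟨e, he, rfl⟩]

lemma fst_mem_verts (he : e ∈ E) : e.1 ∈ verts E := mem_verts_iff.2 ⟨e, he, Or.inl rfl⟩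

lemma snd_mem_verts (he : e ∈ E) : e.2 ∈ verts E := mem_verts_iff.2 ⟨e, he, Or.inr rfl⟩

lemma verts_mono (h : S ⊆ E) : verts S ⊆ verts E := fun _ hv =>
  let ⟨e, he, hev⟩ := mem_verts_iff.1 hv
  mem_verts_iff.2 ⟨e, h he, hev⟩

lemma indeg_mono (h : S ⊆ E) (v : V) : indeg S v ≤ indeg E v :=
  card_le_card (filter_subset_filter _ h)

lemma outdeg_mono (h : S ⊆ E) (v : V) : outdeg S v ≤ outdeg E v :=
  card_le_card (filter_subset_filter _ h)

lemma indeg_eq_zero_of_notMem_verts (hv : v ∉ verts E) : indeg E v = 0 :=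
  card_eq_zero.2 <| filter_eq_empty_iff.2 fun _ he hev => hv (hev ▸ snd_mem_verts he)

lemma outdeg_eq_zero_of_notMem_verts (hv : v ∉ verts E) : outdeg E v = 0 :=
  card_eq_zero.2 <| filter_eq_empty_iff.2 fun _ he hev => hv (hev ▸ fst_mem_verts he)

lemma two_le_indeg (he : e ∈ E) (hf : f ∈ E) (hef : e ≠ f) (h : e.2 = f.2) :
    2 ≤ indeg E e.2 :=
  one_lt_card.2 ⟨e, mem_filter.2 ⟨he, rfl⟩, f, mem_filter.2 ⟨hf, h.symm⟩, hef⟩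

lemma two_le_outdeg (he : e ∈ E) (hf : f ∈ E) (hef : e ≠ f) (h : e.1 = f.1) :
    2 ≤ outdeg E e.1 :=
  one_lt_card.2 ⟨e, mem_filter.2 ⟨he, rfl⟩, f, mem_filter.2 ⟨hf, h.symm⟩, hef⟩

lemma indeg_eq_one_of_forall (he : e ∈ E) (h : ∀ f ∈ E, f.2 = e.2 → f = e) :
    indeg E e.2 = 1 :=
  card_eq_one.2 ⟨e, eq_singleton_iff_unique_mem.2
    ⟨mem_filter.2 ⟨he, rfl⟩, fun f hf => h f (mem_filter.1 hf).1 (mem_filter.1 hf).2⟩⟩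

lemma outdeg_eq_one_of_forall (he : e ∈ E) (h : ∀ f ∈ E, f.1 = e.1 → f = e) :
    outdeg E e.1 = 1 :=
  card_eq_one.2 ⟨e, eq_singleton_iff_unique_mem.2
    ⟨mem_filter.2 ⟨he, rfl⟩, fun f hf => h f (mem_filter.1 hf).1 (mem_filter.1 hf).2⟩⟩

lemma indeg_erase_self (he : e ∈ E) : indeg (E.erase e) e.2 = indeg E e.2 - 1 := by
  rw [indeg, filter_erase]
  exact card_erase_of_mem (mem_filter.2 ⟨he, rfl⟩)

lemma indeg_erase_of_ne (hv : e.2 ≠ v) : indeg (E.erase e) v = indeg E v := by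
  rw [indeg, filter_erase, erase_eq_of_notMem (by simp [hv]), indeg]

lemma outdeg_erase_self (he : e ∈ E) : outdeg (E.erase e) e.1 = outdeg E e.1 - 1 := by
  rw [outdeg, filter_erase]
  exact card_erase_of_mem (mem_filter.2 ⟨he, rfl⟩)

lemma outdeg_erase_of_ne (hv : e.1 ≠ v) : outdeg (E.erase e) v = outdeg E v := by
  rw [outdeg, filter_erase, erase_eq_of_notMem (by simp [hv]), outdeg]

lemma verts_erase (hin : 1 < indeg E e.2) (hout : 1 < outdeg E e.1) :
    verts (E.erase e) = verts E := by
  refine (verts_mono (erase_subset e E)).antisymm fun v hv => ?_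
  obtain ⟨f, hf, hfv⟩ := mem_verts_iff.1 hv
  by_cases hfe : f = e
  · subst hfe
    obtain ⟨g, hg, hgf⟩ := exists_mem_ne hin f
    obtain ⟨h, hh, hhf⟩ := exists_mem_ne hout f
    rcases hfv with rfl | rfl
    · exact (mem_filter.1 hh).2 ▸ fst_mem_verts (mem_erase.2 ⟨hhf, (mem_filter.1 hh).1⟩)
    · exact (mem_filter.1 hg).2 ▸ snd_mem_verts (mem_erase.2 ⟨hgf, (mem_filter.1 hg).1⟩)
  · exact mem_verts_iff.2 ⟨f, mem_erase.2 ⟨hfe, hf⟩, hfv⟩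

end Digraph

namespace IsPhyloNet

variable {E S : Finset (V × V)} {p : ℕ} {X : Finset V} {e f : V × V} {v : V}

lemma degrees_of_mem (hN : IsPhyloNet E p X) (hv : v ∈ X) : indeg E v = 1 ∧ outdeg E v = 0 := by
  rw [← hN.leaves_eq] at hv
  exact (mem_filter.1 hv).2

lemma mem_of_outdeg_eq_zero (hN : IsPhyloNet E p X) (hv : v ∈ verts E) (h : outdeg E v = 0) :
    v ∈ X := by
  by_contra hvX
  by_cases hi : indeg E v = 0
  · have := hN.root_outdeg v hv hi
    omega
  · have := (hN.internal_deg v hv hi hvX).2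
    omega

lemma indeg_le_two (hN : IsPhyloNet E p X) (v : V) : indeg E v ≤ 2 := by
  by_cases hv : v ∈ verts E
  · by_cases hvX : v ∈ X
    · simp [hN.degrees_of_mem hvX]
    · by_cases hi : indeg E v = 0
      · omega
      · have := (hN.internal_deg v hv hi hvX).1
        omega
  · simp [indeg_eq_zero_of_notMem_verts hv]

lemma outdeg_le_two (hN : IsPhyloNet E p X) (v : V) : outdeg E v ≤ 2 := by
  by_cases hv : v ∈ verts E
  · by_cases hvX : v ∈ X
    · simp [hN.degrees_of_mem hvX]
    · by_cases hi : indeg E v = 0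
      · have := hN.root_outdeg v hv hi
        omega
      · have := (hN.internal_deg v hv hi hvX).2
        omega
  · simp [outdeg_eq_zero_of_notMem_verts hv]

lemma indeg_eq_two (hN : IsPhyloNet E p X) (he : e ∈ E) (hf : f ∈ E) (hef : e ≠ f)
    (h : e.2 = f.2) : indeg E e.2 = 2 :=
  le_antisymm (hN.indeg_le_two _) (two_le_indeg he hf hef h)

lemma outdeg_eq_two (hN : IsPhyloNet E p X) (he : e ∈ E) (hf : f ∈ E) (hef : e ≠ f)
    (h : e.1 = f.1) : outdeg E e.1 = 2 :=
  le_antisymm (hN.outdeg_le_two _) (two_le_outdeg he hf hef h)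

/-- Lowering degrees from `2` to `1` changes neither the roots nor the leaves. -/
lemma isSupportNet_of_degrees (hN : IsPhyloNet E p X) (hSE : S ⊆ E) (hverts : verts S = verts E)
    (hin : ∀ v, indeg S v = indeg E v ∨ indeg E v = 2 ∧ indeg S v = 1)
    (hout : ∀ v, outdeg S v = outdeg E v ∨ outdeg E v = 2 ∧ outdeg S v = 1) :
    IsSupportNet E S p X := by
  refine ⟨hSE, hverts, fun v hv => ?_, ?_, ?_, ?_, ?_⟩
  · exact hN.acyclic v (Relation.TransGen.mono (fun _ _ h => hSE h) _ _ hv)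
  · rw [hverts, ← hN.roots_card]
    congr 1
    refine filter_congr fun v _ => ?_
    rcases hin v with h | h <;> omega
  · intro v hv h0
    rw [hverts] at hv
    have := hN.root_outdeg v hv (by rcases hin v with h | h <;> omega)
    rcases hout v with h | h <;> omega
  · rw [hverts, ← hN.leaves_eq]
    refine filter_congr fun v hv => ?_
    have hleaf : outdeg E v = 0 → indeg E v = 1 := fun h =>
      (hN.degrees_of_mem (hN.mem_of_outdeg_eq_zero hv h)).1
    rcases hin v with h | h <;> rcases hout v with h' | h' <;> omega
  · intro v hv hi hvX
    rw [hverts] at hv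
    have := hN.internal_deg v hv (by rcases hin v with h | h <;> omega) hvX
    rcases hin v with h | h <;> rcases hout v with h' | h' <;> omega

lemma isSupportNet_erase (hN : IsPhyloNet E p X) (he : e ∈ E) (hin : indeg E e.2 = 2)
    (hout : outdeg E e.1 = 2) : IsSupportNet E (E.erase e) p X := by
  refine hN.isSupportNet_of_degrees (erase_subset e E) (verts_erase (by omega) (by omega))
    (fun v => ?_) (fun v => ?_)
  · by_cases hv : e.2 = v
    · subst hv
      rw [indeg_erase_self he]
      omega
    · exact Or.inl (indeg_erase_of_ne hv)
  · by_cases hv : e.1 = v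
    · subst hv
      rw [outdeg_erase_self he]
      omega
    · exact Or.inl (outdeg_erase_of_ne hv)

end IsPhyloNet

namespace IsSupportNet

variable {E S : Finset (V × V)} {p : ℕ} {X : Finset V} {e : V × V} {v : V}

lemma outdeg_ne_zero (hN : IsPhyloNet E p X) (hS : IsSupportNet E S p X) (hv : v ∈ verts E)
    (h : outdeg E v ≠ 0) : outdeg S v ≠ 0 := fun h0 =>
  h (hN.degrees_of_mem (hS.2.2.mem_of_outdeg_eq_zero (hS.2.1 ▸ hv) h0)).2

/-- Removing every in-edge of a non-root would create an extra root. -/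
lemma indeg_ne_zero (hN : IsPhyloNet E p X) (hS : IsSupportNet E S p X) (h : indeg E v ≠ 0) :
    indeg S v ≠ 0 := by
  intro h0
  have hv : v ∈ verts E := by
    by_contra hv
    exact h (indeg_eq_zero_of_notMem_verts hv)
  have hroots : (verts E).filter (indeg E · = 0) ⊂ (verts S).filter (indeg S · = 0) := by
    rw [hS.2.1]
    refine Finset.ssubset_iff_subset_ne.2 ⟨monotone_filter_right _ fun w hw => ?_, fun heq => ?_⟩
    · have := indeg_mono hS.1 w
      omega
    · have : v ∈ (verts E).filter (indeg E · = 0) := by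
        rw [heq]
        exact mem_filter.2 ⟨hv, h0⟩
      exact h (mem_filter.1 this).2
  have := card_lt_card hroots
  rw [hN.roots_card, hS.2.2.roots_card] at this
  exact lt_irrefl p this

lemma mem_of_indeg_eq_one (hN : IsPhyloNet E p X) (hS : IsSupportNet E S p X) (he : e ∈ E)
    (h : indeg E e.2 = 1) : e ∈ S := by
  by_contra heS
  have := indeg_mono (subset_erase.2 ⟨hS.1, heS⟩) e.2
  rw [indeg_erase_self he, h] at this
  exact hS.indeg_ne_zero hN (v := e.2) (by omega) (by omega)

lemma mem_of_outdeg_eq_one (hN : IsPhyloNet E p X) (hS : IsSupportNet E S p X) (he : e ∈ E)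
    (h : outdeg E e.1 = 1) : e ∈ S := by
  by_contra heS
  have := outdeg_mono (subset_erase.2 ⟨hS.1, heS⟩) e.1
  rw [outdeg_erase_self he, h] at this
  exact hS.outdeg_ne_zero hN (fst_mem_verts he) (by omega) (by omega)

end IsSupportNet

section Classification

variable {E S : Finset (V × V)} {p : ℕ} {X : Finset V}

lemma IsPhyloNet.isSupportNet_iff (hN : IsPhyloNet E p X) {b c : V × V} (hb : b ∈ E)
    (hc : c ∈ E) (hbc : b ≠ c) (htail : b.1 = c.1) (hb2 : indeg E b.2 = 2)
    (hc2 : indeg E c.2 = 2)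
    (hforced : ∀ e ∈ E, e ≠ b → e ≠ c → outdeg E e.1 = 1 ∨ indeg E e.2 = 1) :
    IsSupportNet E S p X ↔ S = E ∨ S = E.erase b ∨ S = E.erase c := by
  have hout : outdeg E b.1 = 2 := hN.outdeg_eq_two hb hc hbc htail
  constructor
  · intro hS
    have hmiss : ∀ e ∈ E, e ∉ S → e = b ∨ e = c := fun e he heS => by
      by_contra! hne
      rcases hforced e he hne.1 hne.2 with h | h
      exacts [heS (hS.mem_of_outdeg_eq_one hN he h), heS (hS.mem_of_indeg_eq_one hN he h)]
    have hbcS : b ∈ S ∨ c ∈ S := by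
      by_contra! hn
      have := outdeg_mono (subset_erase.2 ⟨subset_erase.2 ⟨hS.1, hn.1⟩, hn.2⟩) b.1
      rw [htail, outdeg_erase_self (mem_erase.2 ⟨hbc.symm, hc⟩), ← htail, outdeg_erase_self hb,
        hout] at this
      exact hS.outdeg_ne_zero hN (fst_mem_verts hb) (by omega) (by omega)
    have hSE := hS.1
    simp only [Finset.ext_iff, mem_erase]
    grind
  · rintro (rfl | rfl | rfl)
    · exact ⟨subset_rfl, rfl, hN⟩
    · exact hN.isSupportNet_erase hb hb2 hout
    · exact hN.isSupportNet_erase hc hc2 (htail ▸ hout)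

lemma setOf_isMinimalSupportNet_eq {b c : V × V} (hb : b ∈ E) (hc : c ∈ E) (hbc : b ≠ c)
    (hiff : ∀ S, IsSupportNet E S p X ↔ S = E ∨ S = E.erase b ∨ S = E.erase c) :
    {S | IsMinimalSupportNet E S p X} = {E.erase b, E.erase c} := by
  have hbE := erase_ssubset hb
  have hcE := erase_ssubset hc
  have hbc' : ¬ E.erase b ⊆ E.erase c := fun h => by simpa using h (mem_erase.2 ⟨hbc.symm, hc⟩)
  have hcb' : ¬ E.erase c ⊆ E.erase b := fun h => by simpa using h (mem_erase.2 ⟨hbc, hb⟩)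
  ext S
  simp only [Set.mem_ofPred_eq, IsMinimalSupportNet, hiff, Set.mem_insert_iff,
    Set.mem_singleton_iff]
  grind

end Classification

def reticulations (E : Finset (V × V)) : Finset V :=
  (verts E).filter fun v => indeg E v = 2

lemma reticulations_erase {E : Finset (V × V)} {e : V × V} (he : e ∈ E)
    (h : indeg E e.2 = 2) (hverts : verts (E.erase e) = verts E) :
    reticulations (E.erase e) = (reticulations E).erase e.2 := by
  ext v
  simp only [reticulations, mem_filter, mem_erase, hverts]
  by_cases hv : e.2 = v
  · subst hv
    simp [indeg_erase_self he, h]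
  · simp [indeg_erase_of_ne hv, Ne.symm hv]

section ZigzagTrail

variable {E Z : Finset (V × V)} {e k : V × V}

lemma IsZigzagTrail.exists_maximal {S : Finset (V × V)} (hS : IsZigzagTrail E S) :
    ∃ Z, IsMaximalZigzagTrail E Z ∧ S ⊆ Z := by
  obtain ⟨Z, hSZ, hZ⟩ := Finite.exists_le_maximal hS
  exact ⟨Z, ⟨hZ.prop, fun _ hT hZT => hZ.not_gt hT hZT⟩, hSZ⟩

lemma isZigzagTrail_singleton (he : e ∈ E) : IsZigzagTrail E {e} :=
  ⟨singleton_subset_iff.2 he, [e], by simp, by simp, by simp, List.isChain_singleton e⟩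

lemma isZigzagTrail_pair (he : e ∈ E) (hk : k ∈ E) (hek : e ≠ k) (h : Shares e k) :
    IsZigzagTrail E {e, k} :=
  ⟨insert_subset he (singleton_subset_iff.2 hk), [e, k], by simp, by simp [hek], by simp,
    List.isChain_pair.2 h⟩

lemma IsMaximalZigzagTrail.mem_of_shares (hZ : IsMaximalZigzagTrail E Z) {l : List (V × V)}
    (hl : (e :: l).Nodup) (hlZ : (e :: l).toFinset = Z) (hchain : (e :: l).IsChain Shares)
    (hk : k ∈ E) (hke : Shares k e) : k ∈ Z := by
  by_contra hkZ
  refine hZ.2 (insert k Z) ⟨insert_subset hk hZ.1.1, k :: e :: l, List.cons_ne_nil _ _,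
    List.nodup_cons.2 ⟨by rwa [← hlZ, List.mem_toFinset] at hkZ, hl⟩, by simp [hlZ],
    List.isChain_cons_cons.2 ⟨hke, hchain⟩⟩ (ssubset_insert hkZ)

end ZigzagTrail

section Fences

variable {S T : Finset (V × V)} {m : ℕ} {f : ℕ → V} {down : Bool}

lemma IsZigzagShape.card_eq (h : IsZigzagShape S m f down) : S.card = m := by
  rw [h.1, card_image_of_injOn fun i hi j hj => h.2 i (mem_range.1 hi) j (mem_range.1 hj),
    card_range]

lemma IsZigzagShape.zigEdge_mem (h : IsZigzagShape S m f down) {i : ℕ} (hi : i < m) :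
    zigEdge f down i ∈ S :=
  h.1 ▸ mem_image_of_mem _ (mem_range.2 hi)

lemma IsMFence.eq_pair (hM : IsMFence T) (hc : T.card = 2) :
    ∃ u x y, T = {(u, x), (u, y)} ∧ x ≠ y := by
  obtain ⟨-, m, f, -, -, -, hsh⟩ := hM
  obtain rfl : m = 2 := hsh.card_eq ▸ hc
  refine ⟨f 1, f 0, f 2, ?_, fun h => ?_⟩
  · rw [hsh.1]
    simp [range_add_one, zigEdge, pair_comm]
  · simpa using hsh.2 0 (by simp) 1 (by simp) (by simp [zigEdge, h])

lemma IsWFence.eq_quad (hW : IsWFence T) (hc : T.card = 4) :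
    ∃ v₀ v₁ v₂ v₃ v₄ : V, T = {(v₀, v₁), (v₂, v₁), (v₂, v₃), (v₄, v₃)} ∧
      v₀ ≠ v₂ ∧ v₂ ≠ v₄ ∧ v₀ ≠ v₄ ∧ v₁ ≠ v₃ := by
  obtain ⟨-, m, f, -, -, h40, hsh⟩ := hW
  obtain rfl : m = 4 := hsh.card_eq ▸ hc
  refine ⟨f 0, f 1, f 2, f 3, f 4, ?_, fun h => ?_, fun h => ?_, Ne.symm h40, fun h => ?_⟩
  · rw [hsh.1]
    ext e
    simp [range_add_one, zigEdge]
    tauto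
  · simpa using hsh.2 0 (by simp) 1 (by simp) (by simp [zigEdge, h])
  · simpa using hsh.2 2 (by simp) 3 (by simp) (by simp [zigEdge, h])
  · simpa using hsh.2 1 (by simp) 2 (by simp) (by simp [zigEdge, h])

lemma IsMFence.not_isWFence (hM : IsMFence T) (hc : T.card = 2) : ¬ IsWFence T := by
  obtain ⟨u, x, y, rfl, -⟩ := hM.eq_pair hc
  rintro ⟨-, m, f, -, -, -, hsh⟩
  obtain rfl : m = 2 := hsh.card_eq ▸ hc
  have h0 := hsh.zigEdge_mem (i := 0) (by simp)
  have h1 := hsh.zigEdge_mem (i := 1) (by simp)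
  have h02 : f 0 = f 2 := by
    simp only [zigEdge, mem_insert, mem_singleton] at h0 h1
    grind
  simpa using hsh.2 0 (by simp) 1 (by simp) (by simp [zigEdge, h02])

end Fences

namespace IsMaximalZigzagTrail

variable {E : Finset (V × V)}

lemma outdeg_eq_one_of_eq_singleton {e : V × V} (hT : IsMaximalZigzagTrail E {e}) :
    outdeg E e.1 = 1 :=
  outdeg_eq_one_of_forall (hT.1.1 (mem_singleton_self e)) fun _ hk hke => mem_singleton.1 <|
    hT.mem_of_shares (l := []) (by simp) (by simp) (List.isChain_singleton e) hk (Or.inl hke)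

lemma indeg_eq_one_of_eq_pair {u x y : V} (hT : IsMaximalZigzagTrail E {(u, x), (u, y)})
    (hxy : x ≠ y) : indeg E x = 1 ∧ indeg E y = 1 := by
  have hx : (u, x) ∈ E := hT.1.1 (by simp)
  have hy : (u, y) ∈ E := hT.1.1 (by simp)
  constructor
  · refine indeg_eq_one_of_forall hx fun k hk hkx => ?_
    have := hT.mem_of_shares (l := [(u, y)]) (by simp [hxy]) (by simp)
      (by simp [Shares]) hk (Or.inr hkx)
    simp only [mem_insert, mem_singleton] at this
    grind
  · refine indeg_eq_one_of_forall hy fun k hk hky => ?_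
    have := hT.mem_of_shares (l := [(u, x)]) (by simp [hxy.symm]) (by simp [pair_comm])
      (by simp [Shares]) hk (Or.inr hky)
    simp only [mem_insert, mem_singleton] at this
    grind

lemma outdeg_eq_one_of_eq_quad {v₀ v₁ v₂ v₃ v₄ : V}
    (hT : IsMaximalZigzagTrail E {(v₀, v₁), (v₂, v₁), (v₂, v₃), (v₄, v₃)})
    (h02 : v₀ ≠ v₂) (h24 : v₂ ≠ v₄) (h04 : v₀ ≠ v₄) (h13 : v₁ ≠ v₃) :
    outdeg E v₀ = 1 ∧ outdeg E v₄ = 1 := by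
  constructor
  · refine outdeg_eq_one_of_forall (e := (v₀, v₁)) (hT.1.1 (by simp)) fun k hk hk0 => ?_
    have := hT.mem_of_shares (l := [(v₂, v₁), (v₂, v₃), (v₄, v₃)])
      (by simp [h02, h24, h04, h13]) (by simp) (by simp [Shares]) hk (Or.inl hk0)
    simp only [mem_insert, mem_singleton] at this
    grind
  · refine outdeg_eq_one_of_forall (e := (v₄, v₃)) (hT.1.1 (by simp)) fun k hk hk4 => ?_
    have := hT.mem_of_shares (l := [(v₂, v₃), (v₂, v₁), (v₀, v₁)])
      (by simp [h24.symm, h04.symm, h13.symm, h02.symm])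
      (by ext; simp; tauto) (by simp [Shares]) hk (Or.inl hk4)
    simp only [mem_insert, mem_singleton] at this
    grind

end IsMaximalZigzagTrail

def HasShortFences (E : Finset (V × V)) : Prop :=
  ∀ Z, IsMaximalZigzagTrail E Z →
    (IsWFence Z ∧ Z.card = 4) ∨ (IsMFence Z ∧ Z.card = 2) ∨ (IsNFence Z ∧ Z.card = 1)

section OneWFence

variable {E Z : Finset (V × V)}

lemma card_eq_four_of_isWFence (htypes : HasShortFences E) (hZ : IsMaximalZigzagTrail E Z)
    (hW : IsWFence Z) : Z.card = 4 := by
  rcases htypes Z hZ with ⟨-, h⟩ | ⟨hM, h⟩ | ⟨-, h⟩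
  · exact h
  · exact absurd hW (hM.not_isWFence h)
  · obtain ⟨-, m, f, -, hm, -, hsh⟩ := hW
    have := hsh.card_eq
    omega

lemma mem_or_outdeg_eq_one_or_indeg_eq_one (htypes : HasShortFences E)
    (hW : ∀ T, IsMaximalZigzagTrail E T → IsWFence T → T = Z) {e : V × V} (he : e ∈ E) :
    e ∈ Z ∨ outdeg E e.1 = 1 ∨ indeg E e.2 = 1 := by
  obtain ⟨T, hT, heT⟩ := (isZigzagTrail_singleton he).exists_maximal
  rw [singleton_subset_iff] at heT
  rcases htypes T hT with ⟨hTW, -⟩ | ⟨hM, hc⟩ | ⟨-, hc⟩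
  · exact Or.inl (hW T hT hTW ▸ heT)
  · obtain ⟨u, x, y, rfl, hxy⟩ := hM.eq_pair hc
    have := hT.indeg_eq_one_of_eq_pair hxy
    simp only [mem_insert, mem_singleton] at heT
    rcases heT with rfl | rfl
    exacts [Or.inr (Or.inr this.1), Or.inr (Or.inr this.2)]
  · obtain ⟨f, rfl⟩ := card_eq_one.1 hc
    obtain rfl := mem_singleton.1 heT
    exact Or.inr (Or.inl hT.outdeg_eq_one_of_eq_singleton)

lemma mem_of_snd_eq (htypes : HasShortFences E)
    (hW : ∀ T, IsMaximalZigzagTrail E T → IsWFence T → T = Z) {e f : V × V} (he : e ∈ E)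
    (hf : f ∈ E) (hef : e ≠ f) (h : e.2 = f.2) : e ∈ Z := by
  obtain ⟨T, hT, hefT⟩ := (isZigzagTrail_pair he hf hef (Or.inr h)).exists_maximal
  rw [insert_subset_iff, singleton_subset_iff] at hefT
  rcases htypes T hT with ⟨hTW, -⟩ | ⟨hM, hc⟩ | ⟨-, hc⟩
  · exact hW T hT hTW ▸ hefT.1
  · obtain ⟨u, x, y, rfl, hxy⟩ := hM.eq_pair hc
    simp only [mem_insert, mem_singleton] at hefT
    grind
  · obtain ⟨g, rfl⟩ := card_eq_one.1 hc
    simp only [mem_singleton] at hefT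
    exact absurd (hefT.1.trans hefT.2.symm) hef

lemma reticulations_subset_image_snd (htypes : HasShortFences E)
    (hW : ∀ T, IsMaximalZigzagTrail E T → IsWFence T → T = Z) :
    reticulations E ⊆ Z.image Prod.snd := by
  intro v hv
  have h2 : 1 < indeg E v := by
    rw [(mem_filter.1 hv).2]
    exact one_lt_two
  obtain ⟨e, he, f, hf, hef⟩ := one_lt_card.1 h2
  rw [mem_filter] at he hf
  exact mem_image.2 ⟨e, mem_of_snd_eq htypes hW he.1 hf.1 hef (he.2.trans hf.2.symm), he.2⟩

/-- The two middle edges `v₂ > v₁` and `v₂ < v₃` of the W-fence `v₀ > v₁ < v₂ > v₃ < v₄`. -/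
lemma exists_middle_edges_of_existsUnique_wFence {p : ℕ} {X : Finset V} (hN : IsPhyloNet E p X)
    (htypes : HasShortFences E) (hW : ∃! Z, IsMaximalZigzagTrail E Z ∧ IsWFence Z) :
    ∃ b c : V × V, b ∈ E ∧ c ∈ E ∧ b ≠ c ∧ b.1 = c.1 ∧ indeg E b.2 = 2 ∧ indeg E c.2 = 2 ∧
      (∀ e ∈ E, e ≠ b → e ≠ c → outdeg E e.1 = 1 ∨ indeg E e.2 = 1) ∧
      reticulations E = {b.2, c.2} := by
  obtain ⟨Z, ⟨hZ, hZW⟩, hZuniq⟩ := hW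
  have hW : ∀ T, IsMaximalZigzagTrail E T → IsWFence T → T = Z := fun T hT hTW =>
    hZuniq T ⟨hT, hTW⟩
  obtain ⟨v₀, v₁, v₂, v₃, v₄, rfl, h02, h24, h04, h13⟩ :=
    hZW.eq_quad (card_eq_four_of_isWFence htypes hZ hZW)
  obtain ⟨hout₀, hout₄⟩ := hZ.outdeg_eq_one_of_eq_quad h02 h24 h04 h13
  have hb : (v₂, v₁) ∈ E := hZ.1.1 (by simp)
  have hc : (v₂, v₃) ∈ E := hZ.1.1 (by simp)
  have hin₁ : indeg E v₁ = 2 :=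
    hN.indeg_eq_two (e := (v₀, v₁)) (hZ.1.1 (by simp)) hb (by simp [h02]) rfl
  have hin₃ : indeg E v₃ = 2 :=
    hN.indeg_eq_two (e := (v₄, v₃)) (hZ.1.1 (by simp)) hc (by simp [h24.symm]) rfl
  refine ⟨(v₂, v₁), (v₂, v₃), hb, hc, by simp [h13], rfl, hin₁, hin₃, fun e he heb hec => ?_, ?_⟩
  · rcases mem_or_outdeg_eq_one_or_indeg_eq_one htypes hW he with h | h
    · simp only [mem_insert, mem_singleton] at h
      rcases h with rfl | rfl | rfl | rfl
      exacts [Or.inl hout₀, (heb rfl).elim, (hec rfl).elim, Or.inl hout₄]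
    · exact h
  · refine (reticulations_subset_image_snd htypes hW).trans (by simp) |>.antisymm ?_
    simp [insert_subset_iff, reticulations, hin₁, hin₃, snd_mem_verts hb, snd_mem_verts hc]

end OneWFence

theorem stmt18_general (X : Finset V)
    (E : Finset (V × V)) (hN : IsPhyloNet E 1 X)
    (htypes : ∀ Z, IsMaximalZigzagTrail E Z →
      (IsWFence Z ∧ Z.card = 4) ∨ (IsMFence Z ∧ Z.card = 2) ∨ (IsNFence Z ∧ Z.card = 1))
    (hW : ∃! Z, IsMaximalZigzagTrail E Z ∧ IsWFence Z) :
    Set.ncard {S | IsMinimalSupportNet E S 1 X} = 2 ∧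
    ∀ S, IsMinimalSupportNet E S 1 X →
      ((verts S).filter fun v => indeg S v = 2).card = 1 := by
  obtain ⟨b, c, hb, hc, hbc, htail, hb2, hc2, hforced, hretic⟩ :=
    exists_middle_edges_of_existsUnique_wFence hN htypes hW
  have hminimal := setOf_isMinimalSupportNet_eq hb hc hbc fun S =>
    hN.isSupportNet_iff hb hc hbc htail hb2 hc2 hforced
  have hheads : b.2 ≠ c.2 := fun h => hbc (Prod.ext htail h)
  refine ⟨by rw [hminimal]; exact Set.ncard_pair ((erase_inj E hb).not.2 hbc), fun S hS => ?_⟩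
  have hS' : S ∈ ({E.erase b, E.erase c} : Set _) := hminimal ▸ hS
  change (reticulations S).card = 1
  rcases hS' with rfl | rfl
  · rw [reticulations_erase hb hb2 hS.1.2.1, hretic]
    simp [hheads]
  · rw [reticulations_erase hc hc2 hS.1.2.1, hretic]
    simp [hheads]

/-- A rooted almost-binary phylogenetic network whose maximal zig-zag trail decomposition
consists of exactly one W-fence of length 4 together with M-fences of length 2 and
N-fences of length 1 has exactly two minimal support networks, each with exactly one
reticulation. -/
theorem stmt18 (X : Finset V) (hX : X.Nonempty)
    (E : Finset (V × V)) (hN : IsPhyloNet E 1 X)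
    (htypes : ∀ Z, IsMaximalZigzagTrail E Z →
      (IsWFence Z ∧ Z.card = 4) ∨ (IsMFence Z ∧ Z.card = 2) ∨ (IsNFence Z ∧ Z.card = 1))
    (hW : ∃! Z, IsMaximalZigzagTrail E Z ∧ IsWFence Z) :
    Set.ncard {S | IsMinimalSupportNet E S 1 X} = 2 ∧
    ∀ S, IsMinimalSupportNet E S 1 X →
      ((verts S).filter fun v => indeg S v = 2).card = 1 :=
  stmt18_general X E hN htypes hW
end
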